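/- The following two subsets of sl(3,C) × C (pairs (A, t) with A a traceless 3×3 complex matrix and t ∈ C) are distinct: V₁ = { (A,t) : det(A) = 0, det(A - t·I) = 0, a₁₁ = a₂₂ } and V₂ = { (A,t) : det(A) = 0, σ₂(A) + t² = 0, a₁₁ = a₂₂ }, where σ₂(A) is the sum of the principal 2×2 minors of A. Specifically, the pair (A, t) with A = E₁₂ + E₂₁ (ones in positions (1,2) and (2,1), zeros elsewhere) and t = 0 lies in V₁ but not in V₂. Hence the two homogenisations of the ideal of the regular fibre, obtained from the two generating sets {p, q, f_H} and {p, p - q, f_H}, define distinct projective varieties in P⁸. -/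

import Mathlib

/-! At `t = 0` the homogenised generator `det (A - t • 1)` of `V₁` collapses to `det A`, so the
slice of `V₁` over `t = 0` imposes no condition beyond `det A = 0`; the homogenised generator
`σ₂(A) + t²` of `V₂` does not collapse and still demands `σ₂(A) = 0`. The symmetric matrix
`E₁₂ + E₂₁` is singular with `σ₂ = -1`, so it separates the two slices. -/

open Matrix

/-- The sum of the three principal 2×2 minors of a 3×3 matrix. -/
def sigma2 (A : Matrix (Fin 3) (Fin 3) ℂ) : ℂ :=
  (A 0 0 * A 1 1 - A 0 1 * A 1 0) +
  (A 0 0 * A 2 2 - A 0 2 * A 2 0) +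
  (A 1 1 * A 2 2 - A 1 2 * A 2 1)

/-- The vanishing locus in `sl(3,ℂ) × ℂ` of the homogenisation of the generating set
`{p, q, f_H}` of the ideal of the regular fibre. -/
def V₁ : Set (Matrix (Fin 3) (Fin 3) ℂ × ℂ) :=
  { P | P.1.trace = 0 ∧ P.1.det = 0 ∧
        (P.1 - P.2 • (1 : Matrix (Fin 3) (Fin 3) ℂ)).det = 0 ∧ P.1 0 0 = P.1 1 1 }

/-- The vanishing locus in `sl(3,ℂ) × ℂ` of the homogenisation of the generating set
`{p, p - q, f_H}` of the same ideal. -/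
def V₂ : Set (Matrix (Fin 3) (Fin 3) ℂ × ℂ) :=
  { P | P.1.trace = 0 ∧ P.1.det = 0 ∧
        sigma2 P.1 + P.2 ^ 2 = 0 ∧ P.1 0 0 = P.1 1 1 }

theorem mem_V₁_zero_iff (A : Matrix (Fin 3) (Fin 3) ℂ) :
    (A, (0 : ℂ)) ∈ V₁ ↔ A.trace = 0 ∧ A.det = 0 ∧ A 0 0 = A 1 1 := by
  simp [V₁]

theorem mem_V₂_zero_iff (A : Matrix (Fin 3) (Fin 3) ℂ) :
    (A, (0 : ℂ)) ∈ V₂ ↔ A.trace = 0 ∧ A.det = 0 ∧ sigma2 A = 0 ∧ A 0 0 = A 1 1 := by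
  simp [V₂]

theorem sigma2_E₁₂_add_E₂₁ : sigma2 !![(0 : ℂ), 1, 0; 1, 0, 0; 0, 0, 0] = -1 := by
  simp [sigma2]

/-- The two homogenisations define distinct varieties: `V₁ ≠ V₂`; specifically the
pair `(E₁₂ + E₂₁, 0)` lies in `V₁` but not in `V₂`. -/
theorem stmt_18 :
    V₁ ≠ V₂ ∧
    (!![(0 : ℂ), 1, 0; 1, 0, 0; 0, 0, 0], (0 : ℂ)) ∈ V₁ ∧
    (!![(0 : ℂ), 1, 0; 1, 0, 0; 0, 0, 0], (0 : ℂ)) ∉ V₂ := by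
  have h₁ : (!![(0 : ℂ), 1, 0; 1, 0, 0; 0, 0, 0], (0 : ℂ)) ∈ V₁ := by
    rw [mem_V₁_zero_iff]
    simp [trace_fin_three, det_fin_three]
  have h₂ : (!![(0 : ℂ), 1, 0; 1, 0, 0; 0, 0, 0], (0 : ℂ)) ∉ V₂ := by
    rw [mem_V₂_zero_iff, sigma2_E₁₂_add_E₂₁]
    norm_num
  exact ⟨ne_of_mem_of_not_mem' h₁ h₂, h₁, h₂⟩
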